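/- arXiv:2405.14177 — 3 statements merged into one kernel-verified Lean document; each statement's English description precedes it below -/
import Mathlib

section
/- For all real numbers γ, ρ, λ, φ with γ > 0, ρ ≥ 0, λ ≥ 0, φ > 0, the function G(A) = -b·A² - (b·γ + c)·A, where b = ρ²/(γρ + λ + φγ/2) and c = 2λρ/(γρ + λ + φγ/2) + φ, satisfies the weak monotonicity condition (G(y₁) - G(y₂))·(y₁ - y₂) ≤ -φ·(y₁ - y₂)² for all y₁, y₂ ∈ [-γ/2, 0]. -/
/-- Weak monotonicity of the Riccati driver G on [-γ/2, 0]. -/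
theorem weak_monotonicity_G (γ ρ lam φ : ℝ) (hγ : 0 < γ) (hρ : 0 ≤ ρ)
    (hlam : 0 ≤ lam) (hφ : 0 < φ)
    (a b c : ℝ) (ha : a = γ * ρ + lam + φ * γ / 2)
    (hb : b = ρ ^ 2 / a) (hc : c = 2 * lam * ρ / a + φ)
    (G : ℝ → ℝ) (hG : ∀ A, G A = -b * A ^ 2 - (b * γ + c) * A) :
    ∀ y₁ y₂ : ℝ, y₁ ∈ Set.Icc (-γ / 2) 0 → y₂ ∈ Set.Icc (-γ / 2) 0 →
      (G y₁ - G y₂) * (y₁ - y₂) ≤ -φ * (y₁ - y₂) ^ 2 := by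
  intro y₁ y₂ h₁ h₂
  obtain ⟨h1l, h1r⟩ := h₁
  obtain ⟨h2l, h2r⟩ := h₂
  have ha0 : 0 < a := by
    rw [ha]; positivity
  have hb0 : 0 ≤ b := by rw [hb]; positivity
  have hc0 : φ ≤ c := by
    rw [hc]
    have : 0 ≤ 2 * lam * ρ / a := by positivity
    linarith
  have hsum : 0 ≤ y₁ + y₂ + γ := by linarith
  rw [hG, hG]
  nlinarith [mul_nonneg hb0 hsum, sq_nonneg (y₁ - y₂), mul_nonneg (mul_nonneg hb0 hsum) (sq_nonneg (y₁ - y₂)), mul_le_mul_of_nonneg_right hc0 (sq_nonneg (y₁ - y₂))]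
end

section
/- Turnpike inequality: under the conditions of the previous ODE setting, with X(t) = (1 - (λ + ρĀ)/a)·P(t) and Y(t) = γ(λ + ρĀ)·P(t)/a, there exist constants K > 0 and μ > 0 (independent of T) such that |X(t)| + |Y(t)| ≤ K·(e^(-μt) + e^(-μ(T-t))) for all t ∈ [0, T] and all T > 0. One may take K = (K₁ + K₂)|x₀| with K₁ = (γρ + φγ/2)/a, K₂ = γ(λ + γρ/2)/a, and μ = ρλ/a. -/
open Real

/-- Turnpike property of the optimal state. -/
theorem turnpike_property (γ ρ lam φ : ℝ) (hγ : 0 < γ) (hρ : 0 < ρ)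
    (hlam : 0 < lam) (hφ : 0 < φ)
    (a : ℝ) (ha : a = γ * ρ + lam + φ * γ / 2)
    (Abar : ℝ) (hA : Abar ∈ Set.Icc 0 (γ / 2))
    (x₀ : ℝ) (P : ℝ → ℝ)
    (hP : ∀ t, 0 ≤ t → HasDerivAt P (-ρ * ((lam + ρ * Abar) / a) * P t) t)
    (hP0 : P 0 = x₀)
    (X Y : ℝ → ℝ)
    (hX : ∀ t, X t = (1 - (lam + ρ * Abar) / a) * P t)
    (hY : ∀ t, Y t = γ * (lam + ρ * Abar) * P t / a) :
    (∃ K > 0, ∃ μ > 0, ∀ T > 0, ∀ t ∈ Set.Icc (0 : ℝ) T,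
        |X t| + |Y t| ≤ K * (exp (-μ * t) + exp (-μ * (T - t)))) ∧
    (∀ T > 0, ∀ t ∈ Set.Icc (0 : ℝ) T,
        |X t| + |Y t| ≤
          ((γ * ρ + φ * γ / 2) / a + γ * (lam + γ * ρ / 2) / a) * |x₀| *
            (exp (-(ρ * lam / a) * t) + exp (-(ρ * lam / a) * (T - t)))) := by
  obtain ⟨hA0, hA1⟩ := hA
  have ha0 : 0 < a := by rw [ha]; positivity
  have hb0 : 0 < lam + ρ * Abar := by positivity
  set c : ℝ := ρ * ((lam + ρ * Abar) / a) with hc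
  have hc0 : 0 < c := by positivity
  -- explicit solution of the ODE
  have hPt : ∀ t, 0 ≤ t → P t = x₀ * exp (-c * t) := by
    intro t ht
    have key := constant_of_has_deriv_right_zero
      (f := fun s => P s * exp (c * s)) (a := 0) (b := t)
      (fun s hs => (((hP s hs.1).mul
        (((hasDerivAt_id s).const_mul c).exp)).continuousAt).continuousWithinAt)
      (fun s hs => by
        have hds := (hP s hs.1).mul (((hasDerivAt_id s).const_mul c).exp)
        simp only [id_eq] at hds
        have hz : (-ρ * ((lam + ρ * Abar) / a) * P s) * exp (c * s)
            + P s * (exp (c * s) * (c * 1)) = 0 := by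
          rw [hc]; ring
        rw [hz] at hds
        exact hds.hasDerivWithinAt)
      t (Set.mem_Icc.mpr ⟨ht, le_refl t⟩)
    simp only [mul_zero, exp_zero, mul_one, hP0] at key
    have he : exp (c * t) ≠ 0 := (exp_pos _).ne'
    have : P t = x₀ * (exp (c * t))⁻¹ := by field_simp; linarith [key]
    rw [this, ← exp_neg]; ring_nf
  set μ : ℝ := ρ * lam / a with hμ
  have hμ0 : 0 < μ := by positivity
  set K₁ : ℝ := (γ * ρ + φ * γ / 2) / a with hK₁
  set K₂ : ℝ := γ * (lam + γ * ρ / 2) / a with hK₂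
  have hK₁0 : 0 < K₁ := by rw [hK₁]; positivity
  have hK₂0 : 0 < K₂ := by rw [hK₂]; positivity
  have hmain : ∀ T > 0, ∀ t ∈ Set.Icc (0:ℝ) T,
      |X t| + |Y t| ≤ (K₁ + K₂) * |x₀| * (exp (-μ * t) + exp (-μ * (T - t))) := by
    intro T hT t ht
    obtain ⟨ht0, htT⟩ := ht
    have hPabs : |P t| = |x₀| * exp (-c * t) := by
      rw [hPt t ht0, abs_mul, abs_of_pos (exp_pos _)]
    have hμc : μ ≤ c := by
      rw [hμ, hc, ← mul_div_assoc]
      gcongr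
      nlinarith
    have hexp : exp (-c * t) ≤ exp (-μ * t) := by
      apply exp_le_exp.2
      nlinarith
    have hXb : |X t| ≤ K₁ * |P t| := by
      rw [hX, abs_mul]
      apply mul_le_mul_of_nonneg_right ?_ (abs_nonneg _)
      have h1 : 0 ≤ 1 - (lam + ρ * Abar) / a := by
        have : (lam + ρ * Abar) / a ≤ 1 := by
          rw [div_le_one ha0, ha]; nlinarith
        linarith
      rw [abs_of_nonneg h1, hK₁]
      rw [sub_le_iff_le_add, ← sub_le_iff_le_add', ha]
      have h2 : 1 - (γ * ρ + φ * γ / 2) / (γ * ρ + lam + φ * γ / 2)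
          = lam / (γ * ρ + lam + φ * γ / 2) := by
        field_simp; ring
      rw [h2]
      gcongr
      nlinarith
    have hYb : |Y t| ≤ K₂ * |P t| := by
      rw [hY]
      have hre : γ * (lam + ρ * Abar) * P t / a = (γ * (lam + ρ * Abar) / a) * P t := by
        ring
      rw [hre, abs_mul]
      apply mul_le_mul_of_nonneg_right ?_ (abs_nonneg _)
      rw [abs_of_pos (by positivity), hK₂]
      gcongr
      nlinarith
    have h1 : |X t| + |Y t| ≤ (K₁ + K₂) * |P t| := by
      rw [add_mul]; exact add_le_add hXb hYb
    have h2 : |P t| ≤ |x₀| * exp (-μ * t) := by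
      rw [hPabs]; exact mul_le_mul_of_nonneg_left hexp (abs_nonneg _)
    have h3 : (K₁ + K₂) * |P t| ≤ (K₁ + K₂) * |x₀| * exp (-μ * t) := by
      rw [mul_assoc]
      exact mul_le_mul_of_nonneg_left h2 (by positivity)
    have h4 : (K₁ + K₂) * |x₀| * exp (-μ * t)
        ≤ (K₁ + K₂) * |x₀| * (exp (-μ * t) + exp (-μ * (T - t))) := by
      apply mul_le_mul_of_nonneg_left (le_add_of_nonneg_right (exp_pos _).le)
      positivity
    linarith
  constructor
  · refine ⟨(K₁ + K₂) * |x₀| + 1, by positivity, μ, hμ0, fun T hT t ht => ?_⟩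
    have := hmain T hT t ht
    have hnn : (0:ℝ) ≤ exp (-μ * t) + exp (-μ * (T - t)) := by positivity
    nlinarith
  · intro T hT t ht
    have := hmain T hT t ht
    rw [hK₁, hK₂, hμ] at this
    exact this
end

section
/- Deterministic Riccati ODE convergence: Let γ, ρ, λ, φ > 0 be constants and a = γρ + λ + φγ/2. Consider, for each T > 0, the terminal value problem -Ā'(t) = -(φĀ(t) - λ + (ρĀ(t) + λ)²/a) on [0,T] with Ā(T) = γ/2. Then the solution Ā^(T) satisfies Ā^(T)(t) ∈ [0, γ/2] for all t ∈ [0,T], and for each fixed t ≥ 0, Ā^(T)(t) converges as T → ∞ to the unique root Ā* ∈ [0, γ/2] of φA - λ + (ρA + λ)²/a = 0. -/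
open Real Filter Topology

/-- Deterministic Riccati ODE: the finite-horizon solution stays in [0, γ/2] and
converges pointwise, as the horizon T → ∞, to the unique root of the algebraic
Riccati equation. -/
theorem riccati_ode_convergence (γ ρ lam φ : ℝ)
    (hγ : 0 < γ) (hρ : 0 < ρ) (hlam : 0 < lam) (hφ : 0 < φ)
    (a : ℝ) (ha : a = γ * ρ + lam + φ * γ / 2)
    (Abar : ℝ → ℝ → ℝ)
    (hode : ∀ T > 0, ∀ t ∈ Set.Icc (0 : ℝ) T,
      HasDerivAt (Abar T) (φ * Abar T t - lam + (ρ * Abar T t + lam) ^ 2 / a) t)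
    (hterm : ∀ T > 0, Abar T T = γ / 2)
    (Astar : ℝ) (hAstar : Astar ∈ Set.Icc 0 (γ / 2))
    (hroot : φ * Astar - lam + (ρ * Astar + lam) ^ 2 / a = 0)
    (huniq : ∀ A ∈ Set.Icc (0 : ℝ) (γ / 2),
      φ * A - lam + (ρ * A + lam) ^ 2 / a = 0 → A = Astar) :
    (∀ T > 0, ∀ t ∈ Set.Icc (0 : ℝ) T, Abar T t ∈ Set.Icc 0 (γ / 2)) ∧
    (∀ t, 0 ≤ t → Tendsto (fun T => Abar T t) atTop (nhds Astar)) := by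
  have ha0 : 0 < a := by rw [ha]; positivity
  set f : ℝ → ℝ := fun A => φ * A - lam + (ρ * A + lam) ^ 2 / a with hfdef
  have hfmono : ∀ x y : ℝ, 0 ≤ x → x ≤ y → f x ≤ f y := by
    intro x y hx hxy
    simp only [hfdef]
    have h2 : (ρ * x + lam) ^ 2 ≤ (ρ * y + lam) ^ 2 := by
      have h0 : 0 ≤ ρ * x + lam := by positivity
      have h1 : ρ * x + lam ≤ ρ * y + lam := by nlinarith
      exact pow_le_pow_left₀ h0 h1 2
    have h3 : (ρ * x + lam) ^ 2 / a ≤ (ρ * y + lam) ^ 2 / a := by gcongr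
    have : φ * x ≤ φ * y := by nlinarith
    linarith
  have hfhalf : 0 < f (γ / 2) := by
    have hkey : f (γ / 2) = ((φ * (γ/2) - lam) * a + (ρ * (γ/2) + lam) ^ 2) / a := by
      simp only [hfdef]; field_simp
    rw [hkey]
    apply div_pos ?_ ha0
    rw [ha]
    nlinarith [sq_nonneg (φ * γ / 2 + ρ * γ / 2), mul_pos hφ hγ, mul_pos hρ hγ,
      mul_pos (mul_pos hφ hγ) (mul_pos hρ hγ)]
  have hfstar : f Astar = 0 := hroot
  have hAstar_lt : Astar < γ / 2 := by
    rcases lt_or_eq_of_le hAstar.2 with h | h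
    · exact h
    · exfalso; rw [h] at hfstar; linarith
  -- Lipschitz constant
  set Kr : ℝ := φ + ρ * (ρ * γ + 2 * lam) / a with hKr
  have hKr0 : 0 ≤ Kr := by positivity
  set K : NNReal := ⟨Kr, hKr0⟩ with hK
  have hlip : ∀ t : ℝ, LipschitzOnWith K (fun x => f x) (Set.Icc 0 (γ / 2)) := by
    intro t
    rw [lipschitzOnWith_iff_dist_le_mul]
    intro x hx y hy
    rw [Real.dist_eq, Real.dist_eq]
    have hcoe : (K : ℝ) = Kr := rfl
    rw [hcoe]
    have hfd : f x - f y = (x - y) * (φ + ρ * (ρ * (x + y) + 2 * lam) / a) := by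
      simp only [hfdef]; field_simp; ring
    rw [hfd, abs_mul]
    have hc0 : 0 ≤ φ + ρ * (ρ * (x + y) + 2 * lam) / a := by
      have : 0 ≤ x + y := by linarith [hx.1, hy.1]
      positivity
    rw [abs_of_nonneg hc0]
    have hcK : φ + ρ * (ρ * (x + y) + 2 * lam) / a ≤ Kr := by
      rw [hKr]
      have : x + y ≤ γ := by linarith [hx.2, hy.2]
      have h1 : ρ * (ρ * (x + y) + 2 * lam) ≤ ρ * (ρ * γ + 2 * lam) := by nlinarith [mul_le_mul_of_nonneg_left this (mul_pos hρ hρ).le]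
      have h2 : ρ * (ρ * (x + y) + 2 * lam) / a ≤ ρ * (ρ * γ + 2 * lam) / a := by gcongr
      linarith
    calc |x - y| * (φ + ρ * (ρ * (x + y) + 2 * lam) / a) ≤ |x - y| * Kr := by
          exact mul_le_mul_of_nonneg_left hcK (abs_nonneg _)
      _ = Kr * |x - y| := mul_comm _ _
  -- continuity
  have hcont : ∀ T > 0, ContinuousOn (Abar T) (Set.Icc 0 T) := fun T hT t ht =>
    ((hode T hT t ht).continuousAt).continuousWithinAt
  -- Step A : upper bound
  have hub : ∀ T > 0, ∀ t ∈ Set.Icc (0 : ℝ) T, Abar T t ≤ γ / 2 := by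
    intro T hT t1 ht1
    by_contra hgt
    push_neg at hgt
    have ht1T : t1 ≠ T := by
      intro h; rw [h, hterm T hT] at hgt; exact lt_irrefl _ hgt
    set S : Set ℝ := {s | s ∈ Set.Icc t1 T ∧ Abar T s = γ / 2} with hS
    have hTS : T ∈ S := ⟨⟨ht1.2, le_refl T⟩, hterm T hT⟩
    have hSeq : S = Set.Icc t1 T ∩ (Abar T) ⁻¹' {γ / 2} := by
      ext s; simp [hS, Set.mem_inter_iff, Set.mem_preimage]
    have hSclosed : IsClosed S := by
      rw [hSeq]
      exact ContinuousOn.preimage_isClosed_of_isClosed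
        ((hcont T hT).mono (Set.Icc_subset_Icc_left ht1.1)) isClosed_Icc isClosed_singleton
    have hSne : S.Nonempty := ⟨T, hTS⟩
    have hSbdd : BddBelow S := ⟨t1, fun s hs => hs.1.1⟩
    set t2 := sInf S with ht2def
    have ht2S : t2 ∈ S := hSclosed.csInf_mem hSne hSbdd
    have ht2mem : t2 ∈ Set.Icc (0 : ℝ) T := ⟨le_trans ht1.1 ht2S.1.1, ht2S.1.2⟩
    have ht12 : t1 < t2 := by
      rcases lt_or_eq_of_le ht2S.1.1 with h | h
      · exact h
      · exfalso; rw [← h] at ht2S; rw [ht2S.2] at hgt; exact lt_irrefl _ hgt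
    have hbetween : ∀ s ∈ Set.Ico t1 t2, γ / 2 < Abar T s := by
      intro s hs
      by_contra hle
      push_neg at hle
      have hsub : Set.Icc t1 s ⊆ Set.Icc 0 T :=
        Set.Icc_subset_Icc ht1.1 (le_trans hs.2.le ht2S.1.2)
      have hIVT := intermediate_value_Icc' hs.1 ((hcont T hT).mono hsub)
      obtain ⟨c, hc, hceq⟩ := hIVT ⟨hle, hgt.le⟩
      have hcS : c ∈ S := ⟨⟨hc.1, le_trans hc.2 (le_trans hs.2.le ht2S.1.2)⟩, hceq⟩
      have : t2 ≤ c := csInf_le hSbdd hcS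
      have : c ≤ s := hc.2
      linarith [hs.2, csInf_le hSbdd hcS]
    -- derivative at t2 is positive, contradiction with values above γ/2 to the left
    have hd := hode T hT t2 ht2mem
    rw [ht2S.2] at hd
    have hdpos : (0 : ℝ) < φ * (γ / 2) - lam + (ρ * (γ / 2) + lam) ^ 2 / a := hfhalf
    have hslope := hasDerivAt_iff_tendsto_slope.mp hd
    have hmonoF : 𝓝[<] t2 ≤ 𝓝[≠] t2 :=
      nhdsWithin_mono _ (fun x hx => ne_of_lt hx)
    have hslope' := hslope.mono_left hmonoF
    have hpos : ∀ᶠ s in 𝓝[<] t2, 0 < slope (Abar T) t2 s :=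
      hslope'.eventually (eventually_gt_nhds hdpos)
    have hIoo : Set.Ioo t1 t2 ∈ 𝓝[<] t2 :=
      Ioo_mem_nhdsLT_of_mem ⟨ht12, le_refl t2⟩
    obtain ⟨s, hs1, hs2⟩ := (hpos.and (Filter.eventually_mem_set.mpr hIoo)).exists
    rw [slope_def_field] at hs1
    have hne : Abar T s < Abar T t2 := by
      rcases div_pos_iff.mp hs1 with ⟨h1, h2⟩ | ⟨h1, h2⟩
      · exfalso; linarith [hs2.2]
      · linarith
    rw [ht2S.2] at hne
    exact absurd (hbetween s ⟨hs2.1.le, hs2.2⟩) (not_lt.mpr hne.le)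
  -- Step B : lower bound
  have hlb : ∀ T > 0, ∀ t ∈ Set.Icc (0 : ℝ) T, Astar ≤ Abar T t := by
    intro T hT t1 ht1
    by_contra hlt
    push_neg at hlt
    have hTgt : Astar < Abar T T := by rw [hterm T hT]; exact hAstar_lt
    have hIVT := intermediate_value_Icc ht1.2
      ((hcont T hT).mono (Set.Icc_subset_Icc ht1.1 le_rfl))
    obtain ⟨c0, hc0, hc0eq⟩ := hIVT ⟨hlt.le, hTgt.le⟩
    set S : Set ℝ := {s | s ∈ Set.Icc t1 T ∧ Abar T s = Astar} with hS
    have hSeq : S = Set.Icc t1 T ∩ (Abar T) ⁻¹' {Astar} := by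
      ext s; simp [hS, Set.mem_inter_iff, Set.mem_preimage]
    have hSclosed : IsClosed S := by
      rw [hSeq]
      exact ContinuousOn.preimage_isClosed_of_isClosed
        ((hcont T hT).mono (Set.Icc_subset_Icc_left ht1.1)) isClosed_Icc isClosed_singleton
    have hSne : S.Nonempty := ⟨c0, ⟨hc0, hc0eq⟩⟩
    have hSbdd : BddAbove S := ⟨T, fun s hs => hs.1.2⟩
    set t2 := sSup S with ht2def
    have ht2S : t2 ∈ S := hSclosed.csSup_mem hSne hSbdd
    have ht2mem : t2 ∈ Set.Icc (0 : ℝ) T := ⟨le_trans ht1.1 ht2S.1.1, ht2S.1.2⟩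
    have ht2T : t2 < T := by
      rcases lt_or_eq_of_le ht2S.1.2 with h | h
      · exact h
      · exfalso; rw [h] at ht2S
        have h2 := ht2S.2
        rw [hterm T hT] at h2
        linarith
    -- on [t2, T), the solution stays in [0, γ/2]
    have hmemI : ∀ s ∈ Set.Ico t2 T, Abar T s ∈ Set.Icc 0 (γ / 2) := by
      intro s hs
      have hsmem : s ∈ Set.Icc (0 : ℝ) T := ⟨le_trans ht2mem.1 hs.1, hs.2.le⟩
      refine ⟨?_, hub T hT s hsmem⟩
      rcases eq_or_lt_of_le hs.1 with h | h
      · rw [← h, ht2S.2]; exact hAstar.1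
      · by_contra hneg
        push_neg at hneg
        have hIVT2 := intermediate_value_Icc hs.2.le
          ((hcont T hT).mono (Set.Icc_subset_Icc hsmem.1 le_rfl))
        obtain ⟨c, hc, hceq⟩ := hIVT2 ⟨by linarith [hAstar.1], hTgt.le⟩
        have hcS : c ∈ S := ⟨⟨le_trans ht2S.1.1 (le_trans hs.1 hc.1), hc.2⟩, hceq⟩
        have := le_csSup hSbdd hcS
        linarith [hc.1]
    -- uniqueness: Abar T coincides with the constant Astar on [t2, T]
    have huniqODE := ODE_solution_unique_of_mem_Icc_right
      (v := fun _ x => f x) (s := fun _ => Set.Icc 0 (γ / 2)) (K := K) (fun t _ => hlip t)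
      (f := Abar T) (g := fun _ => Astar) (a := t2) (b := T)
      ((hcont T hT).mono (Set.Icc_subset_Icc ht2mem.1 le_rfl))
      (fun s hs => (hode T hT s ⟨le_trans ht2mem.1 hs.1, hs.2.le⟩).hasDerivWithinAt)
      hmemI
      continuousOn_const
      (fun s _ => by
        have : HasDerivWithinAt (fun _ : ℝ => Astar) 0 (Set.Ici s) s :=
          (hasDerivWithinAt_const s _ Astar)
        simpa [hfstar] using this)
      (fun _ _ => hAstar)
      ht2S.2
    have hTeq : Abar T T = Astar := huniqODE ⟨ht2T.le, le_rfl⟩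
    rw [hterm T hT] at hTeq
    linarith
  have hmem : ∀ T > 0, ∀ t ∈ Set.Icc (0 : ℝ) T, Abar T t ∈ Set.Icc 0 (γ / 2) :=
    fun T hT t ht => ⟨le_trans hAstar.1 (hlb T hT t ht), hub T hT t ht⟩
  -- Step C : monotone in t
  have hmono : ∀ T > 0, MonotoneOn (Abar T) (Set.Icc 0 T) := by
    intro T hT
    apply monotoneOn_of_deriv_nonneg (convex_Icc 0 T) (hcont T hT)
    · intro x hx
      rw [interior_Icc] at hx
      exact ((hode T hT x (Set.mem_Icc_of_Ioo hx)).differentiableAt).differentiableWithinAt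
    · intro x hx
      rw [interior_Icc] at hx
      have hx' := Set.mem_Icc_of_Ioo hx
      rw [(hode T hT x hx').deriv]
      have := hfmono Astar (Abar T x) hAstar.1 (hlb T hT x hx')
      rw [hfstar] at this
      exact this
  -- Step D : translation identity
  have htrans : ∀ T T' : ℝ, 0 < T → T ≤ T' → ∀ t ∈ Set.Icc (0 : ℝ) T,
      Abar T t = Abar T' (t + (T' - T)) := by
    intro T T' hT hTT'
    have hT' : 0 < T' := lt_of_lt_of_le hT hTT'
    set c : ℝ := T' - T with hcdef
    have hc0 : 0 ≤ c := by simp [hcdef]; linarith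
    have hmap : ∀ s ∈ Set.Icc (0 : ℝ) T, s + c ∈ Set.Icc (0 : ℝ) T' := by
      intro s hs
      constructor
      · linarith [hs.1]
      · simp only [hcdef]; linarith [hs.2]
    have key : Set.EqOn (Abar T) (fun s => Abar T' (s + c)) (Set.Icc 0 T) := by
      apply ODE_solution_unique_of_mem_Icc_left
        (v := fun _ x => f x) (s := fun _ => Set.Icc 0 (γ / 2)) (K := K) (fun t _ => hlip t)
        (hcont T hT)
        (fun s hs => (hode T hT s ⟨hs.1.le, hs.2⟩).hasDerivWithinAt)
        (fun s hs => hmem T hT s ⟨hs.1.le, hs.2⟩)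
        ((hcont T' hT').comp (continuous_add_right c).continuousOn
          (fun s hs => hmap s hs))
        ?_
        (fun s hs => hmem T' hT' (s + c) (hmap s ⟨hs.1.le, hs.2⟩))
        ?_
      · intro s hs
        have h1 := hode T' hT' (s + c) (hmap s ⟨hs.1.le, hs.2⟩)
        have h2 : HasDerivAt (fun u => Abar T' (u + c))
            ((φ * Abar T' (s + c) - lam + (ρ * Abar T' (s + c) + lam) ^ 2 / a) * 1) s :=
          HasDerivAt.comp s h1 ((hasDerivAt_id s).add_const c)
        rw [mul_one] at h2
        exact h2.hasDerivWithinAt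
      · show Abar T T = Abar T' (T + c)
        have hTc : T + c = T' := by simp [hcdef]
        rw [hTc, hterm T hT, hterm T' hT']
    intro t ht
    exact key ht
  refine ⟨hmem, ?_⟩
  intro t ht0
  set t₀ : ℝ := t + 1 with ht₀def
  have ht₀0 : 0 < t₀ := by simp [ht₀def]; linarith
  set F : ℝ → ℝ := fun T => Abar (max T t₀) t with hFdef
  have hmax : ∀ T : ℝ, 0 < max T t₀ := fun T => lt_of_lt_of_le ht₀0 (le_max_right _ _)
  have htmem : ∀ T : ℝ, t ∈ Set.Icc (0 : ℝ) (max T t₀) := fun T =>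
    ⟨ht0, le_trans (by rw [ht₀def]; linarith) (le_max_right T t₀)⟩
  have hanti : Antitone F := by
    intro T1 T2 h12
    simp only [hFdef]
    have hS12 : max T1 t₀ ≤ max T2 t₀ := max_le_max h12 le_rfl
    have h1 : Abar (max T1 t₀) t = Abar (max T2 t₀) (t + (max T2 t₀ - max T1 t₀)) :=
      htrans _ _ (hmax T1) hS12 t (htmem T1)
    rw [h1]
    apply hmono _ (hmax T2) (htmem T2) ?_ ?_
    · constructor
      · linarith [sub_nonneg.mpr hS12]
      · have : t ≤ max T1 t₀ := (htmem T1).2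
        linarith
    · linarith [sub_nonneg.mpr hS12]
  have hbdd : BddBelow (Set.range F) := by
    refine ⟨Astar, ?_⟩
    rintro x ⟨T, rfl⟩
    exact hlb _ (hmax T) t (htmem T)
  have hlim := tendsto_atTop_ciInf hanti hbdd
  set L : ℝ := ⨅ T, F T with hLdef
  have hLlb : Astar ≤ L :=
    le_ciInf (fun T => hlb _ (hmax T) t (htmem T))
  have hLub : L ≤ γ / 2 :=
    le_trans (ciInf_le hbdd t₀) (hub _ (hmax t₀) t (htmem t₀))
  have hL0 : 0 ≤ L := le_trans hAstar.1 hLlb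
  have hfL0 : 0 ≤ f L := by
    have := hfmono Astar L hAstar.1 hLlb
    rw [hfstar] at this; exact this
  have hfLle : f L ≤ 0 := by
    by_contra hcpos
    push_neg at hcpos
    set c : ℝ := f L with hcdef
    set T : ℝ := max t₀ (t + γ / 2 / c + 1) with hTdef
    have hTt₀ : t₀ ≤ T := le_max_left _ _
    have hTt : t + γ / 2 / c + 1 ≤ T := le_max_right _ _
    have hT0 : 0 < T := lt_of_lt_of_le ht₀0 hTt₀
    have htT : t < T := by
      have : t < t₀ := by simp [ht₀def]
      linarith
    have hmaxT : max T t₀ = T := max_eq_left hTt₀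
    have hLle : L ≤ Abar T t := by
      have h := ciInf_le hbdd T
      rw [← hLdef] at h
      simpa only [hFdef, hmaxT] using h
    have htmem2 : t ∈ Set.Icc (0 : ℝ) T := ⟨ht0, htT.le⟩
    have hge : ∀ s ∈ Set.Icc t T, L ≤ Abar T s := fun s hs =>
      le_trans hLle (hmono T hT0 htmem2 ⟨le_trans ht0 hs.1, hs.2⟩ hs.1)
    have hmono2 : MonotoneOn (fun s => Abar T s - c * s) (Set.Icc t T) := by
      apply monotoneOn_of_deriv_nonneg (convex_Icc t T)
      · exact (((hcont T hT0).mono (Set.Icc_subset_Icc ht0 le_rfl)).sub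
          ((continuous_const.mul continuous_id).continuousOn))
      · intro x hx
        rw [interior_Icc] at hx
        have hx' : x ∈ Set.Icc (0 : ℝ) T := ⟨le_trans ht0 hx.1.le, hx.2.le⟩
        exact ((hode T hT0 x hx').sub
          ((hasDerivAt_id x).const_mul c)).differentiableAt.differentiableWithinAt
      · intro x hx
        rw [interior_Icc] at hx
        have hx' : x ∈ Set.Icc (0 : ℝ) T := ⟨le_trans ht0 hx.1.le, hx.2.le⟩
        have hd : HasDerivAt (fun s => Abar T s - c * s)
            ((φ * Abar T x - lam + (ρ * Abar T x + lam) ^ 2 / a) - c * 1) x :=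
          (hode T hT0 x hx').sub ((hasDerivAt_id x).const_mul c)
        rw [hd.deriv, mul_one, hcdef]
        exact sub_nonneg.mpr (hfmono L (Abar T x) hL0 (hge x ⟨hx.1.le, hx.2.le⟩))
    have hineq := hmono2 ⟨le_rfl, htT.le⟩ ⟨htT.le, le_rfl⟩ htT.le
    have hATt : 0 ≤ Abar T t := le_trans hAstar.1 (hlb T hT0 t htmem2)
    have hTeq : Abar T T = γ / 2 := hterm T hT0
    have h2 : c * (γ / 2 / c + 1) ≤ c * (T - t) := by
      apply mul_le_mul_of_nonneg_left ?_ hcpos.le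
      linarith
    have h3 : c * (γ / 2 / c + 1) = γ / 2 + c := by
      field_simp
    have h4 : c * (T - t) = c * T - c * t := by ring
    have hineq' : Abar T t - c * t ≤ Abar T T - c * T := hineq
    rw [hTeq] at hineq'
    clear_value c T
    linarith [hineq', hATt, h2, h3, h4, hcpos]
  have hfL : f L = 0 := le_antisymm hfLle hfL0
  have hLeq : L = Astar := huniq L ⟨hL0, hLub⟩ hfL
  have hlim2 : Tendsto F atTop (nhds Astar) := by
    rwa [hLeq] at hlim
  apply hlim2.congr'
  filter_upwards [eventually_ge_atTop t₀] with T hT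
  simp only [hFdef, max_eq_left hT]
end
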